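/- arXiv:2109.08643 — 6 statements merged into one kernel-verified Lean document; each statement's English description precedes it below -/
import Mathlib

section
/- Let p > 1 and let g : (0,∞) → (0,∞) be continuous and satisfy g(w)/g(v) ≥ (w/v)^{p-1} for all w ≥ v > 0. Define ψ(w) = w^{-1}·∫₀^w g(v) dv for w > 0. Then ψ is differentiable on (0,∞), its derivative satisfies ψ′(w) = (g(w) − ψ(w))/w, and moreover ψ′(w) ≥ (p−1)·ψ(w)/w for every w > 0. -/
open MeasureTheory Real

/-- Under condition (g2) with `p > 1`, for a continuous positive `g` on `(0,∞)`, the function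
`ψ(w) = w⁻¹·∫₀^w g(v) dv` is differentiable on `(0,∞)` with
`ψ′(w) = (g(w) − ψ(w))/w`, and `ψ′(w) ≥ (p−1)·ψ(w)/w` for every `w > 0`. -/
theorem psi_deriv_lower_bound (g : ℝ → ℝ) (p : ℝ) (hp : 1 < p)
    (hg_cont : ContinuousOn g (Set.Ioi 0))
    (hg_pos : ∀ v : ℝ, 0 < v → 0 < g v)
    (hg2 : ∀ v w : ℝ, 0 < v → v ≤ w → (w / v) ^ (p - 1) ≤ g w / g v)
    (ψ : ℝ → ℝ)
    (hψ : ∀ w : ℝ, ψ w = w⁻¹ * ∫ v in (0 : ℝ)..w, g v) :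
    ∀ w : ℝ, 0 < w →
      HasDerivAt ψ ((g w - ψ w) / w) w ∧
      (p - 1) * ψ w / w ≤ (g w - ψ w) / w := by
  -- pointwise bound: g v ≤ g w * (v/w)^(p-1) for 0 < v ≤ w
  have key : ∀ v w : ℝ, 0 < v → v ≤ w → g v ≤ g w * (v / w) ^ (p - 1) := by
    intro v w hv hvw
    have hw : 0 < w := lt_of_lt_of_le hv hvw
    have h := hg2 v w hv hvw
    have hgv := hg_pos v hv
    have h1 : g v * (w / v) ^ (p - 1) ≤ g w := by
      calc g v * (w / v) ^ (p - 1) ≤ g v * (g w / g v) := by gcongr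
        _ = g w := by field_simp
    have hmul : (w / v) ^ (p - 1) * (v / w) ^ (p - 1) = 1 := by
      rw [← Real.mul_rpow (by positivity) (by positivity),
        show w / v * (v / w) = 1 by field_simp, Real.one_rpow]
    calc g v = g v * (w / v) ^ (p - 1) * (v / w) ^ (p - 1) := by
          rw [mul_assoc, hmul, mul_one]
      _ ≤ g w * (v / w) ^ (p - 1) := by gcongr
  intro w hw
  -- integrability of g on [0, w]
  have hdom : IntegrableOn (fun v : ℝ => (g w * w ^ (-(p - 1))) * v ^ (p - 1))
      (Set.Ioc 0 w) volume := by
    rw [← intervalIntegrable_iff_integrableOn_Ioc_of_le hw.le]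
    exact (intervalIntegral.intervalIntegrable_rpow' (by linarith)).const_mul _
  have hInt : IntervalIntegrable g volume 0 w := by
    rw [intervalIntegrable_iff_integrableOn_Ioc_of_le hw.le]
    have hmeas : AEStronglyMeasurable g (volume.restrict (Set.Ioc 0 w)) :=
      (hg_cont.mono (fun x hx => hx.1)).aestronglyMeasurable measurableSet_Ioc
    apply Integrable.mono' hdom hmeas
    filter_upwards [ae_restrict_mem measurableSet_Ioc] with v hv
    rw [Real.norm_eq_abs, abs_of_pos (hg_pos v hv.1)]
    calc g v ≤ g w * (v / w) ^ (p - 1) := key v w hv.1 hv.2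
      _ = g w * w ^ (-(p - 1)) * v ^ (p - 1) := by
        rw [Real.div_rpow hv.1.le hw.le, Real.rpow_neg hw.le]
        ring
  -- derivative of the primitive
  have hG : HasDerivAt (fun u => ∫ v in (0:ℝ)..u, g v) (g w) w := by
    apply intervalIntegral.integral_hasDerivAt_right hInt
    · exact hg_cont.stronglyMeasurableAtFilter isOpen_Ioi w hw
    · exact hg_cont.continuousAt (Ioi_mem_nhds hw)
  have hψw := hψ w
  -- derivative of ψ
  have hderiv : HasDerivAt ψ ((g w - ψ w) / w) w := by
    have h1 : HasDerivAt (fun u : ℝ => u⁻¹ * ∫ v in (0:ℝ)..u, g v)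
        (-(w ^ 2)⁻¹ * (∫ v in (0:ℝ)..w, g v) + w⁻¹ * g w) w :=
      (hasDerivAt_inv hw.ne').mul hG
    have hfun : ψ = fun u : ℝ => u⁻¹ * ∫ v in (0:ℝ)..u, g v := funext hψ
    rw [hfun]
    convert h1 using 1
    rw [show ψ w = w⁻¹ * ∫ v in (0:ℝ)..w, g v from hψw] at *
    field_simp
    ring
  refine ⟨hderiv, ?_⟩
  -- the inequality p * ψ w ≤ g w
  have hGle : (∫ v in (0:ℝ)..w, g v) ≤ g w * w / p := by
    have h1 : (∫ v in (0:ℝ)..w, g v)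
        ≤ ∫ v in Set.Ioc 0 w, (g w * w ^ (-(p - 1))) * v ^ (p - 1) := by
      rw [intervalIntegral.integral_of_le hw.le]
      apply setIntegral_mono_on
        ((intervalIntegrable_iff_integrableOn_Ioc_of_le hw.le).mp hInt) hdom
        measurableSet_Ioc
      intro v hv
      calc g v ≤ g w * (v / w) ^ (p - 1) := key v w hv.1 hv.2
        _ = g w * w ^ (-(p - 1)) * v ^ (p - 1) := by
          rw [Real.div_rpow hv.1.le hw.le, Real.rpow_neg hw.le]; ring
    have h2 : (∫ v in Set.Ioc 0 w, (g w * w ^ (-(p - 1))) * v ^ (p - 1))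
        = g w * w / p := by
      rw [← intervalIntegral.integral_of_le hw.le]
      rw [intervalIntegral.integral_const_mul]
      rw [integral_rpow (Or.inl (by linarith))]
      rw [Real.zero_rpow (by linarith), sub_add_cancel]
      rw [sub_zero, Real.rpow_neg hw.le]
      rw [show w ^ p = w ^ (p - 1) * w by
        rw [← Real.rpow_add_one hw.ne' (p - 1)]; ring_nf]
      have hwp1 : (0:ℝ) < w ^ (p - 1) := Real.rpow_pos_of_pos hw _
      field_simp
    linarith
  have hψle : p * ψ w ≤ g w := by
    rw [hψw]
    rw [show p * (w⁻¹ * ∫ v in (0:ℝ)..w, g v) = p * (∫ v in (0:ℝ)..w, g v) / w by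
      field_simp]
    rw [div_le_iff₀ hw]
    calc p * (∫ v in (0:ℝ)..w, g v) ≤ p * (g w * w / p) := by
          apply mul_le_mul_of_nonneg_left hGle (by linarith)
      _ = g w * w := by field_simp
  rw [div_le_div_iff₀ hw hw]
  nlinarith
end

section
/- Let p > 1, c₁ > 0, q > 1, b₀ > 0 and let g : (0,∞) → (0,∞) be continuous, nondecreasing, satisfy g(w)/g(v) ≥ (w/v)^{p-1} for all w ≥ v > 0, and g(w)/g(v) ≤ c₁·(w/v)^{q-1} for all w ≥ v ≥ b₀. Define ψ(w) = w^{-1}·∫₀^w g(v) dv. Then for every w ≥ 2b₀ one has ψ′(w) ≤ (c₁q/(1 − 2^{−q}))·ψ(w)/w. -/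
open MeasureTheory Real

/-- Under conditions (g1) and (g2), for a continuous nondecreasing positive `g` on `(0,∞)`,
the function `ψ(w) = w⁻¹·∫₀^w g(v) dv` satisfies
`ψ′(w) ≤ (c₁q/(1 − 2^{−q}))·ψ(w)/w` for every `w ≥ 2b₀`. -/
theorem psi_deriv_upper_bound (g : ℝ → ℝ) (p c₁ q b₀ : ℝ)
    (hp : 1 < p) (hc₁ : 0 < c₁) (hq : 1 < q) (hb₀ : 0 < b₀)
    (hg_cont : ContinuousOn g (Set.Ioi 0))
    (hg_mono : ∀ x y : ℝ, 0 < x → x ≤ y → g x ≤ g y)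
    (hg_pos : ∀ v : ℝ, 0 < v → 0 < g v)
    (hg2 : ∀ v w : ℝ, 0 < v → v ≤ w → (w / v) ^ (p - 1) ≤ g w / g v)
    (hg1 : ∀ v w : ℝ, b₀ ≤ v → v ≤ w → g w / g v ≤ c₁ * (w / v) ^ (q - 1))
    (ψ : ℝ → ℝ)
    (hψ : ∀ w : ℝ, ψ w = w⁻¹ * ∫ v in (0 : ℝ)..w, g v) :
    ∀ w : ℝ, 2 * b₀ ≤ w →
      HasDerivAt ψ ((g w - ψ w) / w) w ∧
      (g w - ψ w) / w ≤ (c₁ * q / (1 - (2 : ℝ) ^ (-q))) * ψ w / w := by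
  -- integrability of g on (0, w] for any w > 0
  have hinteg : ∀ w : ℝ, 0 < w → IntegrableOn g (Set.Ioc 0 w) := by
    intro w hw
    have hmonoOn : MonotoneOn g (Set.Ioc 0 w) := fun x hx y hy hxy =>
      hg_mono x y hx.1 hxy
    have hmeas : AEMeasurable g (volume.restrict (Set.Ioc 0 w)) :=
      aemeasurable_restrict_of_monotoneOn measurableSet_Ioc hmonoOn
    have hconst : IntegrableOn (fun _ => g w) (Set.Ioc 0 w) := by
      simp [IntegrableOn, measure_Ioc_lt_top]
    refine Integrable.mono' hconst hmeas.aestronglyMeasurable ?_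
    filter_upwards [ae_restrict_mem measurableSet_Ioc] with x hx
    rw [Real.norm_eq_abs, abs_of_pos (hg_pos x hx.1)]
    exact hg_mono x w hx.1 hx.2
  have hii : ∀ w : ℝ, 0 < w → IntervalIntegrable g volume 0 w := by
    intro w hw
    rw [intervalIntegrable_iff, Set.uIoc_of_le hw.le]
    exact hinteg w hw
  intro w hw
  have hw0 : 0 < w := lt_of_lt_of_le (by linarith) hw
  have hwI : w ∈ Set.Ioi (0:ℝ) := hw0
  -- derivative part
  have hFTC : HasDerivAt (fun u => ∫ v in (0:ℝ)..u, g v) (g w) w :=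
    intervalIntegral.integral_hasDerivAt_right (hii w hw0)
      (hg_cont.stronglyMeasurableAtFilter isOpen_Ioi w hwI)
      (hg_cont.continuousAt (isOpen_Ioi.mem_nhds hwI))
  have hinv : HasDerivAt (fun u : ℝ => u⁻¹) (-(w^2)⁻¹) w := by
    simpa using hasDerivAt_inv hw0.ne'
  have hψeq : ψ = fun u => u⁻¹ * ∫ v in (0:ℝ)..u, g v := funext hψ
  have hderiv : HasDerivAt ψ ((g w - ψ w) / w) w := by
    rw [hψeq]
    have : HasDerivAt (fun u => u⁻¹ * ∫ v in (0:ℝ)..u, g v) (-(w^2)⁻¹ * (∫ v in (0:ℝ)..w, g v) + w⁻¹ * g w) w := hinv.mul hFTC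
    convert this using 1
    beta_reduce
    field_simp
    ring
  refine ⟨hderiv, ?_⟩
  -- key estimate: g w ≤ C * ψ w
  set I : ℝ := ∫ v in (0:ℝ)..w, g v with hI
  have hq0 : 0 < q := by linarith
  have h2q : (2:ℝ) ^ (-q) < 1 :=
    Real.rpow_lt_one_of_one_lt_of_neg one_lt_two (by linarith)
  have h2q0 : (0:ℝ) < 1 - (2:ℝ) ^ (-q) := by linarith
  -- pointwise lower bound on [w/2, w]
  have hhalf : b₀ ≤ w / 2 := by linarith
  have hhalfpos : 0 < w / 2 := by linarith
  have hpt : ∀ v ∈ Set.Icc (w/2) w,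
      g w / c₁ * (v / w) ^ (q - 1) ≤ g v := by
    intro v hv
    have hv0 : 0 < v := lt_of_lt_of_le hhalfpos hv.1
    have hgv : 0 < g v := hg_pos v hv0
    have h1 := hg1 v w (le_trans hhalf hv.1) hv.2
    have h2 : g w ≤ c₁ * (w / v) ^ (q - 1) * g v := by
      rw [div_le_iff₀ hgv] at h1
      linarith
    have hmul : (w / v) ^ (q - 1) * (v / w) ^ (q - 1) = 1 := by
      rw [← Real.mul_rpow (by positivity) (by positivity)]
      rw [div_mul_div_comm]
      rw [show w * v / (v * w) = 1 by rw [mul_comm v w]; exact div_self (by positivity)]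
      exact Real.one_rpow _
    have hvw : (0:ℝ) < (v / w) ^ (q - 1) := by positivity
    calc g w / c₁ * (v / w) ^ (q - 1)
        ≤ c₁ * (w / v) ^ (q - 1) * g v / c₁ * (v / w) ^ (q - 1) := by
          apply mul_le_mul_of_nonneg_right _ hvw.le
          exact div_le_div_of_nonneg_right h2 hc₁.le
      _ = g v * ((w / v) ^ (q - 1) * (v / w) ^ (q - 1)) := by field_simp
      _ = g v := by rw [hmul, mul_one]
  -- integral lower bound over [w/2, w]
  have hii2 : IntervalIntegrable g volume (w/2) w := by
    rw [intervalIntegrable_iff, Set.uIoc_of_le (by linarith)]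
    exact (hinteg w hw0).mono_set (Set.Ioc_subset_Ioc_left hhalfpos.le)
  have hlow : IntervalIntegrable (fun v => g w / c₁ * (v / w) ^ (q - 1)) volume (w/2) w := by
    apply ContinuousOn.intervalIntegrable
    apply ContinuousOn.mul continuousOn_const
    apply ContinuousOn.rpow_const
    · exact (continuousOn_id.div continuousOn_const (fun x _ => hw0.ne'))
    · intro x hx
      left
      rw [Set.uIcc_of_le (by linarith)] at hx
      have : 0 < x := lt_of_lt_of_le hhalfpos hx.1
      positivity
  have hintlb : (g w / c₁) * (w * (1 - (2:ℝ) ^ (-q)) / q) ≤ ∫ v in (w/2)..w, g v := by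
    have hcomp : (∫ v in (w/2)..w, g w / c₁ * (v / w) ^ (q - 1)) ≤ ∫ v in (w/2)..w, g v :=
      intervalIntegral.integral_mono_on (by linarith) hlow hii2 hpt
    have hcalc : (∫ v in (w/2)..w, g w / c₁ * (v / w) ^ (q - 1))
        = (g w / c₁) * (w * (1 - (2:ℝ) ^ (-q)) / q) := by
      have hrw : ∀ v ∈ Set.uIcc (w/2) w, g w / c₁ * (v / w) ^ (q - 1)
          = g w / c₁ * w ^ (-(q-1)) * v ^ (q - 1) := by
        intro v hv
        rw [Set.uIcc_of_le (by linarith)] at hv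
        have hv0 : 0 < v := lt_of_lt_of_le hhalfpos hv.1
        rw [Real.div_rpow hv0.le hw0.le, Real.rpow_neg hw0.le]
        ring
      rw [intervalIntegral.integral_congr hrw]
      rw [intervalIntegral.integral_const_mul, integral_rpow (Or.inl (by linarith))]
      have hq1 : q - 1 + 1 = q := by ring
      rw [hq1]
      have hhq : (w/2) ^ q = w ^ q * (2:ℝ) ^ (-q) := by
        rw [Real.div_rpow hw0.le (by norm_num), Real.rpow_neg (by norm_num)]
        ring
      rw [hhq, Real.rpow_neg hw0.le]
      have hwq : (0:ℝ) < w ^ q := Real.rpow_pos_of_pos hw0 q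
      have hw1 : w ^ (q-1) * w = w ^ q := by
        rw [← Real.rpow_add_one hw0.ne' (q-1), hq1]
      field_simp
      linear_combination (-(g w)) * hw1
    linarith [hcomp, hcalc ▸ hcomp]
  -- 𝒢 w ≥ ∫_{w/2}^w g since g ≥ 0 on (0, w/2]
  have hsplit : I = (∫ v in (0:ℝ)..(w/2), g v) + ∫ v in (w/2)..w, g v := by
    rw [hI, ← intervalIntegral.integral_add_adjacent_intervals (hii (w/2) hhalfpos) hii2]
  have hfirst : 0 ≤ ∫ v in (0:ℝ)..(w/2), g v := by
    rw [intervalIntegral.integral_of_le hhalfpos.le]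
    apply setIntegral_nonneg measurableSet_Ioc
    intro u hu
    exact (hg_pos u hu.1).le
  have hIlb : (g w / c₁) * (w * (1 - (2:ℝ) ^ (-q)) / q) ≤ I := by
    rw [hsplit]; linarith
  -- conclude
  have hψpos : ψ w = w⁻¹ * I := hψ w
  have hgw : g w ≤ (c₁ * q / (1 - (2:ℝ) ^ (-q))) * ψ w := by
    rw [hψpos]
    rw [div_mul_eq_mul_div, le_div_iff₀ h2q0]
    have := mul_le_mul_of_nonneg_left hIlb (by positivity : (0:ℝ) ≤ c₁ * q * w⁻¹)
    calc g w * (1 - (2:ℝ) ^ (-q))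
        = c₁ * q * w⁻¹ * ((g w / c₁) * (w * (1 - (2:ℝ) ^ (-q)) / q)) := by
          field_simp
      _ ≤ c₁ * q * w⁻¹ * I := this
      _ = c₁ * q * (w⁻¹ * I) := by ring
  have hψnn : 0 ≤ ψ w := by
    rw [hψpos]
    have hI0 : 0 ≤ I := le_trans (mul_nonneg (div_nonneg (hg_pos w hw0).le hc₁.le) (div_nonneg (mul_nonneg hw0.le h2q0.le) hq0.le)) hIlb
    exact mul_nonneg (by positivity) hI0
  have hkey : g w - ψ w ≤ c₁ * q / (1 - (2:ℝ) ^ (-q)) * ψ w := by linarith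
  rw [div_le_div_iff₀ hw0 hw0]
  nlinarith [hkey, hw0]
end

section
/- Let n ≥ 1, 0 < r* ≤ 1, let λ : (0,r*) → [0,∞) be nonincreasing with t ↦ λ(t)/ln(1/t) nondecreasing on (0,r*), and let p : ℝⁿ → ℝ satisfy |p(x) − p(y)| ≤ λ(|x−y|)/ln(1/|x−y|) whenever 0 < |x−y| < r*. Then for every K ≥ 1, every r with 0 < r ≤ 1/4 and 2r < r*, every x₀ ∈ ℝⁿ, all x₁, x₂ in the open ball B_r(x₀), and every v with r ≤ v ≤ K, one has (v/r)^{p(x₁)−1} ≤ K^{λ(2r)/ln(1/(2r))}·e^{2λ(2r)}·(v/r)^{p(x₂)−1}. -/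
open Real

/-- Quantitative non-logarithmic condition (g3) for the variable-exponent model
`g(x,v) = v^{p(x)−1}` under the non-logarithmic continuity assumption
`|p(x) − p(y)| ≤ λ(|x−y|)/ln(1/|x−y|)`, with `λ` nonincreasing and `λ(t)/ln(1/t)`
nondecreasing on `(0,r*)`: for `K ≥ 1`, `0 < r ≤ 1/4`, `2r < r*`, points `x₁, x₂ ∈ B_r(x₀)`
and `r ≤ v ≤ K`,
`(v/r)^{p(x₁)−1} ≤ K^{λ(2r)/ln(1/(2r))}·e^{2λ(2r)}·(v/r)^{p(x₂)−1}`. -/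
theorem variable_exponent_nonlog_g3 (n : ℕ) (hn : 1 ≤ n) (rs : ℝ)
    (hrs0 : 0 < rs) (hrs1 : rs ≤ 1)
    (lam : ℝ → ℝ)
    (hlam_nonneg : ∀ t : ℝ, 0 < t → t < rs → 0 ≤ lam t)
    (hlam_antitone : ∀ s t : ℝ, 0 < s → s ≤ t → t < rs → lam t ≤ lam s)
    (hlam_log_mono : ∀ s t : ℝ, 0 < s → s ≤ t → t < rs →
      lam s / Real.log (1 / s) ≤ lam t / Real.log (1 / t))
    (p : EuclideanSpace ℝ (Fin n) → ℝ)
    (hp : ∀ x y : EuclideanSpace ℝ (Fin n), 0 < ‖x - y‖ → ‖x - y‖ < rs →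
      |p x - p y| ≤ lam ‖x - y‖ / Real.log (1 / ‖x - y‖)) :
    ∀ K : ℝ, 1 ≤ K → ∀ r : ℝ, 0 < r → r ≤ 1 / 4 → 2 * r < rs →
      ∀ x₀ : EuclideanSpace ℝ (Fin n),
        ∀ x₁ ∈ Metric.ball x₀ r, ∀ x₂ ∈ Metric.ball x₀ r,
          ∀ v : ℝ, r ≤ v → v ≤ K →
            (v / r) ^ (p x₁ - 1) ≤
              K ^ (lam (2 * r) / Real.log (1 / (2 * r))) * Real.exp (2 * lam (2 * r)) *
                (v / r) ^ (p x₂ - 1) := by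

  intro K hK r hr hr4 hrrs x₀ x₁ hx₁ x₂ hx₂ v hv1 hv2
  have h2r : 0 < 2 * r := by linarith
  have hlog2r : 0 < Real.log (1 / (2 * r)) :=
    Real.log_pos (by rw [lt_div_iff₀ h2r]; linarith)
  have hLnn : 0 ≤ lam (2 * r) := hlam_nonneg _ h2r hrrs
  set L := lam (2 * r) with hLdef
  set eps := L / Real.log (1 / (2 * r)) with hedef
  have hεnn : 0 ≤ eps := div_nonneg hLnn hlog2r.le
  have ha1 : (1 : ℝ) ≤ v / r := (one_le_div hr).2 hv1
  have ha0 : (0 : ℝ) < v / r := lt_of_lt_of_le one_pos ha1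
  have habs : |p x₁ - p x₂| ≤ eps := by
    by_cases h : x₁ = x₂
    · simp [h, hεnn]
    · have hd0 : 0 < ‖x₁ - x₂‖ := by
        rw [norm_sub_pos_iff]; exact h
      have hd2r : ‖x₁ - x₂‖ < 2 * r := by
        have h1 := Metric.mem_ball.1 hx₁
        have h2 := Metric.mem_ball.1 hx₂
        rw [dist_eq_norm] at h1 h2
        calc ‖x₁ - x₂‖ ≤ ‖x₁ - x₀‖ + ‖x₀ - x₂‖ :=
              norm_sub_le_norm_sub_add_norm_sub _ _ _
          _ < r + r := by
              have h2' : ‖x₀ - x₂‖ < r := by rwa [norm_sub_rev]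
              linarith
          _ = 2 * r := by ring
      exact (hp x₁ x₂ hd0 (hd2r.trans hrrs)).trans
        (hlam_log_mono _ _ hd0 hd2r.le hrrs)
  have key1 : (v / r) ^ (p x₁ - p x₂) ≤ (v / r) ^ eps :=
    Real.rpow_le_rpow_of_exponent_le ha1 ((le_abs_self _).trans habs)
  have hK0 : (0 : ℝ) < K := lt_of_lt_of_le one_pos hK
  have havK : v / r ≤ K / r := by gcongr
  have key2 : (v / r) ^ eps ≤ (K / r) ^ eps := Real.rpow_le_rpow ha0.le havK hεnn
  have key3 : (K / r) ^ eps = K ^ eps * (1 / r) ^ eps := by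
    rw [div_eq_mul_one_div K r, Real.mul_rpow hK0.le (by positivity)]
  have hloglog : Real.log (1 / r) ≤ 2 * Real.log (1 / (2 * r)) := by
    have h1 : (0 : ℝ) < 1 / r := by positivity
    have h2 : (1 : ℝ) / r ≤ (1 / (2 * r)) ^ (2 : ℕ) := by
      rw [div_pow, one_pow]
      rw [div_le_div_iff₀ hr (by positivity)]
      nlinarith
    calc Real.log (1 / r) ≤ Real.log ((1 / (2 * r)) ^ (2 : ℕ)) :=
          Real.log_le_log h1 h2
      _ = 2 * Real.log (1 / (2 * r)) := by
          rw [Real.log_pow]; push_cast; ring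
  have key4 : (1 / r) ^ eps ≤ Real.exp (2 * L) := by
    rw [Real.rpow_def_of_pos (by positivity)]
    apply Real.exp_le_exp.2
    calc Real.log (1 / r) * eps ≤ (2 * Real.log (1 / (2 * r))) * eps :=
          mul_le_mul_of_nonneg_right hloglog hεnn
      _ = 2 * L := by rw [hedef]; field_simp
  have hx2pos : (0 : ℝ) < (v / r) ^ (p x₂ - 1) := Real.rpow_pos_of_pos ha0 _
  have split : (v / r) ^ (p x₁ - 1) = (v / r) ^ (p x₁ - p x₂) * (v / r) ^ (p x₂ - 1) := by
    rw [← Real.rpow_add ha0]; ring_nf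
  rw [split]
  have hchain : (v / r) ^ (p x₁ - p x₂) ≤ K ^ eps * Real.exp (2 * L) := by
    calc (v / r) ^ (p x₁ - p x₂) ≤ (K / r) ^ eps := key1.trans key2
      _ = K ^ eps * (1 / r) ^ eps := key3
      _ ≤ K ^ eps * Real.exp (2 * L) := by
          apply mul_le_mul_of_nonneg_left key4 (Real.rpow_nonneg hK0.le _)
  exact mul_le_mul_of_nonneg_right hchain hx2pos.le
end

section
/- Let n ≥ 1, 1 < p < q, A > 0, α with 0 < q − p ≤ α ≤ 1, and 0 < r* with r* ≤ 1. Let λ : (0,r*) → [0,∞) be nonincreasing with t ↦ t^α·e^{λ(t)} nondecreasing on (0,r*), and let a : ℝⁿ → [0,∞) satisfy |a(x) − a(y)| ≤ A·|x−y|^α·e^{λ(|x−y|)} whenever 0 < |x−y| < r*. Define g(x,v) = v^{p−1} + a(x)·v^{q−1}. Then for every x₀ ∈ ℝⁿ, every r > 0 with 2r < r*, all x₁, x₂ in the open ball B_r(x₀), every K ≥ r, and every v with r ≤ v ≤ K, one has g(x₁, v/r) ≤ (1 + A·2^α·K^α)·e^{λ(r)}·g(x₂, v/r). -/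
open Real

/-- The non-logarithmic condition (g3), with `c₂(K) = 1 + A·2^α·K^α`, for the double-phase
model `g(x,v) = v^{p−1} + a(x)·v^{q−1}` under the non-logarithmic Hölder-type assumption on
the coefficient `a`. -/
theorem double_phase_nonlog_g3 (n : ℕ) (hn : 1 ≤ n) (p q A α rs : ℝ)
    (hp : 1 < p) (hpq : p < q) (hA : 0 < A)
    (hα₁ : q - p ≤ α) (hα₂ : α ≤ 1) (hrs0 : 0 < rs) (hrs1 : rs ≤ 1)
    (lam : ℝ → ℝ)
    (hlam_nonneg : ∀ t : ℝ, 0 < t → t < rs → 0 ≤ lam t)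
    (hlam_antitone : ∀ s t : ℝ, 0 < s → s ≤ t → t < rs → lam t ≤ lam s)
    (hlam_pow_mono : ∀ s t : ℝ, 0 < s → s ≤ t → t < rs →
      s ^ α * Real.exp (lam s) ≤ t ^ α * Real.exp (lam t))
    (a : EuclideanSpace ℝ (Fin n) → ℝ) (ha : ∀ x, 0 ≤ a x)
    (haHolder : ∀ x y : EuclideanSpace ℝ (Fin n), 0 < ‖x - y‖ → ‖x - y‖ < rs →
      |a x - a y| ≤ A * ‖x - y‖ ^ α * Real.exp (lam ‖x - y‖)) :
    ∀ x₀ : EuclideanSpace ℝ (Fin n), ∀ r : ℝ, 0 < r → 2 * r < rs →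
      ∀ x₁ ∈ Metric.ball x₀ r, ∀ x₂ ∈ Metric.ball x₀ r,
        ∀ K : ℝ, r ≤ K → ∀ v : ℝ, r ≤ v → v ≤ K →
          (v / r) ^ (p - 1) + a x₁ * (v / r) ^ (q - 1) ≤
            (1 + A * (2 : ℝ) ^ α * K ^ α) * Real.exp (lam r) *
              ((v / r) ^ (p - 1) + a x₂ * (v / r) ^ (q - 1)) := by
  intro x₀ r hr hr2 x₁ hx₁ x₂ hx₂ K hK v hv1 hv2
  have hα0 : 0 < α := lt_of_lt_of_le (by linarith) hα₁
  set w : ℝ := v / r with hw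
  have hw1 : 1 ≤ w := (one_le_div hr).mpr hv1
  have hw0 : 0 < w := lt_of_lt_of_le one_pos hw1
  have hwK : w ≤ K / r := by rw [hw]; gcongr
  have hK0 : 0 < K := lt_of_lt_of_le hr hK
  have hrrs : r < rs := by linarith
  have hlamr : 0 ≤ lam r := hlam_nonneg r hr hrrs
  have he1 : (1:ℝ) ≤ Real.exp (lam r) := Real.one_le_exp hlamr
  -- bound on |a x₁ - a x₂|
  have hΔ : |a x₁ - a x₂| ≤ A * 2 ^ α * r ^ α * Real.exp (lam r) := by
    rcases eq_or_lt_of_le (norm_nonneg (x₁ - x₂)) with h0 | hd0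
    · have : x₁ - x₂ = 0 := by
        have := norm_eq_zero.mp h0.symm; exact this
      have hx : x₁ = x₂ := sub_eq_zero.mp this
      rw [hx, sub_self, abs_zero]
      positivity
    · set d := ‖x₁ - x₂‖ with hd
      have hd2r : d ≤ 2 * r := by
        have h1 := mem_ball_iff_norm.mp hx₁
        have h2 := mem_ball_iff_norm.mp hx₂
        calc d ≤ ‖x₁ - x₀‖ + ‖x₀ - x₂‖ := by
                have : x₁ - x₂ = (x₁ - x₀) + (x₀ - x₂) := by abel
                rw [hd, this]; exact norm_add_le _ _
          _ ≤ r + r := by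
                have h2' : ‖x₀ - x₂‖ < r := by rwa [norm_sub_rev]
                linarith
          _ = 2 * r := by ring
      have hdrs : d < rs := lt_of_le_of_lt hd2r hr2
      have h1 := haHolder x₁ x₂ hd0 hdrs
      have h2 : d ^ α * Real.exp (lam d) ≤ (2*r) ^ α * Real.exp (lam (2*r)) := by
        rcases eq_or_lt_of_le hd2r with he | hlt
        · rw [he]
        · exact hlam_pow_mono d (2*r) hd0 hd2r hr2
      have h3 : Real.exp (lam (2*r)) ≤ Real.exp (lam r) :=
        Real.exp_le_exp.mpr (hlam_antitone r (2*r) hr (by linarith) hr2)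
      have h4 : (2*r) ^ α = 2 ^ α * r ^ α :=
        Real.mul_rpow (by norm_num) hr.le
      calc |a x₁ - a x₂| ≤ A * d ^ α * Real.exp (lam d) := h1
        _ = A * (d ^ α * Real.exp (lam d)) := by ring
        _ ≤ A * ((2*r) ^ α * Real.exp (lam (2*r))) := by
            apply mul_le_mul_of_nonneg_left h2 hA.le
        _ ≤ A * ((2*r) ^ α * Real.exp (lam r)) := by
            apply mul_le_mul_of_nonneg_left _ hA.le
            exact mul_le_mul_of_nonneg_left h3 (Real.rpow_nonneg (by linarith) _)
        _ = A * 2 ^ α * r ^ α * Real.exp (lam r) := by rw [h4]; ring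
  -- bound on w^(q-1)
  have hwq : w ^ (q - 1) ≤ (K / r) ^ α * w ^ (p - 1) := by
    have h1 : w ^ (q - 1) = w ^ (q - p) * w ^ (p - 1) := by
      rw [← Real.rpow_add hw0]; ring_nf
    rw [h1]
    apply mul_le_mul_of_nonneg_right _ (Real.rpow_nonneg hw0.le _)
    calc w ^ (q - p) ≤ w ^ α := Real.rpow_le_rpow_of_exponent_le hw1 hα₁
      _ ≤ (K / r) ^ α := Real.rpow_le_rpow hw0.le hwK hα0.le
  have hrK : r ^ α * (K / r) ^ α = K ^ α := by
    rw [← Real.mul_rpow hr.le (by positivity)]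
    rw [mul_div_cancel₀ _ hr.ne']
  have hwp : 0 ≤ w ^ (p - 1) := Real.rpow_nonneg hw0.le _
  have hwq0 : 0 ≤ w ^ (q - 1) := Real.rpow_nonneg hw0.le _
  set e := Real.exp (lam r) with hedef
  have key : a x₁ * w ^ (q - 1) ≤ a x₂ * w ^ (q - 1) + A * 2 ^ α * K ^ α * e * w ^ (p - 1) := by
    have h1 : a x₁ ≤ a x₂ + A * 2 ^ α * r ^ α * e := by
      have := abs_sub_abs_le_abs_sub (a x₁) (a x₂)
      have h2 := le_of_abs_le hΔ
      linarith [abs_of_nonneg (ha x₁), abs_of_nonneg (ha x₂), le_abs_self (a x₁ - a x₂)]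
    calc a x₁ * w ^ (q - 1) ≤ (a x₂ + A * 2 ^ α * r ^ α * e) * w ^ (q - 1) :=
          mul_le_mul_of_nonneg_right h1 hwq0
      _ = a x₂ * w ^ (q - 1) + A * 2 ^ α * r ^ α * e * w ^ (q - 1) := by ring
      _ ≤ a x₂ * w ^ (q - 1) + A * 2 ^ α * r ^ α * e * ((K / r) ^ α * w ^ (p - 1)) := by
          have hc : (0:ℝ) ≤ A * 2 ^ α * r ^ α * e := by positivity
          nlinarith [mul_le_mul_of_nonneg_left hwq hc]
      _ = a x₂ * w ^ (q - 1) + A * 2 ^ α * (r ^ α * (K / r) ^ α) * e * w ^ (p - 1) := by ring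
      _ = a x₂ * w ^ (q - 1) + A * 2 ^ α * K ^ α * e * w ^ (p - 1) := by rw [hrK]
  have hC : (0:ℝ) ≤ A * 2 ^ α * K ^ α := by positivity
  have hg2 : w ^ (p - 1) ≤ w ^ (p - 1) + a x₂ * w ^ (q - 1) := by
    nlinarith [mul_nonneg (ha x₂) hwq0]
  have hrhs : (1 + A * 2 ^ α * K ^ α) * e * (w ^ (p - 1) + a x₂ * w ^ (q - 1))
      = e * (w ^ (p - 1) + a x₂ * w ^ (q - 1))
        + A * 2 ^ α * K ^ α * e * (w ^ (p - 1) + a x₂ * w ^ (q - 1)) := by ring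
  rw [hrhs]
  have h5 : w ^ (p - 1) + a x₂ * w ^ (q - 1) ≤ e * (w ^ (p - 1) + a x₂ * w ^ (q - 1)) := by
    nlinarith [mul_nonneg (ha x₂) hwq0]
  have h6 : A * 2 ^ α * K ^ α * e * w ^ (p - 1)
      ≤ A * 2 ^ α * K ^ α * e * (w ^ (p - 1) + a x₂ * w ^ (q - 1)) := by
    apply mul_le_mul_of_nonneg_left hg2
    positivity
  linarith [key]
end

section
/- Let n ≥ 1, 1 < p < q, B ≥ 0, and let b : ℝⁿ → [0,B]. Define g(x,v) = v^{p−1}·(1 + b(x)·ln(1+v)) for v > 0. Then for every x ∈ ℝⁿ and all w ≥ v > 0 one has (w/v)^{p−1} ≤ g(x,w)/g(x,v) ≤ (1 + B/(e(q−p)))·(w/v)^{q−1}. -/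
open Real

lemma log_le_div_e {x : ℝ} (hx : 0 < x) : Real.log x ≤ x / Real.exp 1 := by
  have h := Real.log_le_sub_one_of_pos (show 0 < x / Real.exp 1 by positivity)
  rw [Real.log_div (ne_of_gt hx) (by positivity), Real.log_exp] at h
  linarith

lemma log_le_rpow_div_es {t s : ℝ} (ht : 1 ≤ t) (hs : 0 < s) :
    Real.log t ≤ t ^ s / (Real.exp 1 * s) := by
  have ht0 : 0 < t := lt_of_lt_of_le one_pos ht
  have h1 : Real.log (t ^ s) = s * Real.log t := Real.log_rpow ht0 s
  have h2 : Real.log (t ^ s) ≤ t ^ s / Real.exp 1 := log_le_div_e (Real.rpow_pos_of_pos ht0 s)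
  rw [h1] at h2
  rw [le_div_iff₀ (by positivity)]
  rw [le_div_iff₀ (Real.exp_pos 1)] at h2
  calc Real.log t * (Real.exp 1 * s) = (s * Real.log t) * Real.exp 1 := by ring
    _ ≤ t ^ s := h2

/-- The degenerate double-phase model `g(x,v) = v^{p−1}·(1 + b(x)·ln(1+v))` with `1 < p < q`
and `0 ≤ b(x) ≤ B` satisfies condition (g2) with exponent `p` and condition (g1) with
exponent `q` and constant `1 + B/(e(q−p))`, for all `w ≥ v > 0`. -/
theorem degenerate_double_phase_structure (n : ℕ) (hn : 1 ≤ n) (p q B : ℝ)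
    (hp : 1 < p) (hpq : p < q) (hB : 0 ≤ B)
    (b : EuclideanSpace ℝ (Fin n) → ℝ) (hb : ∀ x, 0 ≤ b x ∧ b x ≤ B) :
    ∀ x : EuclideanSpace ℝ (Fin n), ∀ v w : ℝ, 0 < v → v ≤ w →
      (w / v) ^ (p - 1) ≤
          (w ^ (p - 1) * (1 + b x * Real.log (1 + w))) /
            (v ^ (p - 1) * (1 + b x * Real.log (1 + v))) ∧
      (w ^ (p - 1) * (1 + b x * Real.log (1 + w))) /
          (v ^ (p - 1) * (1 + b x * Real.log (1 + v))) ≤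
        (1 + B / (Real.exp 1 * (q - p))) * (w / v) ^ (q - 1) := by
  intro x v w hv hvw
  obtain ⟨hb0, hbB⟩ := hb x
  set β := b x with hβ
  have hw : 0 < w := lt_of_lt_of_le hv hvw
  set t : ℝ := w / v with htdef
  have ht1 : 1 ≤ t := (one_le_div hv).2 hvw
  have ht0 : 0 < t := lt_of_lt_of_le one_pos ht1
  have hLv : 0 ≤ Real.log (1 + v) := Real.log_nonneg (by linarith)
  have hLw : 0 ≤ Real.log (1 + w) := Real.log_nonneg (by linarith)
  have hLt : 0 ≤ Real.log t := Real.log_nonneg ht1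
  have hDv : (0:ℝ) < 1 + β * Real.log (1 + v) := by nlinarith
  have hDw : (0:ℝ) < 1 + β * Real.log (1 + w) := by nlinarith
  have hvp : (0:ℝ) < v ^ (p - 1) := Real.rpow_pos_of_pos hv _
  have hwp : (0:ℝ) < w ^ (p - 1) := Real.rpow_pos_of_pos hw _
  have hD : (0:ℝ) < v ^ (p - 1) * (1 + β * Real.log (1 + v)) := by positivity
  -- key: t^(p-1) * v^(p-1) = w^(p-1)
  have hmul : t ^ (p - 1) * v ^ (p - 1) = w ^ (p - 1) := by
    rw [← Real.mul_rpow (le_of_lt ht0) (le_of_lt hv)]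
    congr 1
    rw [htdef]
    field_simp
  -- log(1+w) ≤ log(1+v) + log t
  have hlogsum : Real.log (1 + w) ≤ Real.log (1 + v) + Real.log t := by
    have h1 : (1 + w) ≤ (1 + v) * t := by
      have hv' : v ≠ 0 := ne_of_gt hv
      have : (1 + v) * t = w / v + w := by rw [htdef]; field_simp
      rw [this]; linarith
    calc Real.log (1 + w) ≤ Real.log ((1 + v) * t) :=
          Real.log_le_log (by linarith) h1
      _ = Real.log (1 + v) + Real.log t := Real.log_mul (by linarith) (ne_of_gt ht0)
  constructor
  · rw [le_div_iff₀ hD]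
    rw [Real.div_rpow (le_of_lt hw) (le_of_lt hv)]
    have hmono : Real.log (1 + v) ≤ Real.log (1 + w) :=
      Real.log_le_log (by linarith) (by linarith)
    calc w ^ (p - 1) / v ^ (p - 1) * (v ^ (p - 1) * (1 + β * Real.log (1 + v)))
        = w ^ (p - 1) * (1 + β * Real.log (1 + v)) := by
          have hvp' : v ^ (p - 1) ≠ 0 := ne_of_gt hvp
          field_simp
      _ ≤ w ^ (p - 1) * (1 + β * Real.log (1 + w)) :=
          mul_le_mul_of_nonneg_left (by nlinarith) (le_of_lt hwp)
  · rw [div_le_iff₀ hD]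
    set c : ℝ := B / (Real.exp 1 * (q - p)) with hcdef
    have hσ : (0:ℝ) < q - p := by linarith
    have hc0 : 0 ≤ c := div_nonneg hB (le_of_lt (mul_pos (Real.exp_pos 1) hσ))
    have hts : 1 ≤ t ^ (q - p) := Real.one_le_rpow ht1 (le_of_lt hσ)
    have hlogt : Real.log t ≤ t ^ (q - p) / (Real.exp 1 * (q - p)) :=
      log_le_rpow_div_es ht1 hσ
    have hBlog : B * Real.log t ≤ c * t ^ (q - p) := by
      calc B * Real.log t ≤ B * (t ^ (q - p) / (Real.exp 1 * (q - p))) :=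
            mul_le_mul_of_nonneg_left hlogt hB
        _ = c * t ^ (q - p) := by rw [hcdef]; ring
    have key : 1 + β * Real.log (1 + w) ≤
        (1 + β * Real.log (1 + v)) * ((1 + c) * t ^ (q - p)) := by
      have h1 : 1 + β * Real.log (1 + w) ≤
          (1 + β * Real.log (1 + v)) * (1 + B * Real.log t) := by
        nlinarith [mul_le_mul_of_nonneg_left hlogsum hb0,
          mul_le_mul_of_nonneg_right hbB hLt,
          mul_nonneg (mul_nonneg hb0 hLv) (mul_nonneg hB hLt)]
      have h2 : 1 + B * Real.log t ≤ (1 + c) * t ^ (q - p) := by nlinarith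
      calc 1 + β * Real.log (1 + w)
          ≤ (1 + β * Real.log (1 + v)) * (1 + B * Real.log t) := h1
        _ ≤ (1 + β * Real.log (1 + v)) * ((1 + c) * t ^ (q - p)) := by
            apply mul_le_mul_of_nonneg_left h2 (le_of_lt hDv)
    have htq : t ^ (q - 1) = t ^ (q - p) * t ^ (p - 1) := by
      rw [← Real.rpow_add ht0]; ring_nf
    calc w ^ (p - 1) * (1 + β * Real.log (1 + w))
        ≤ w ^ (p - 1) * ((1 + β * Real.log (1 + v)) * ((1 + c) * t ^ (q - p))) := by
          apply mul_le_mul_of_nonneg_left key (le_of_lt hwp)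
      _ = (1 + c) * t ^ (q - 1) * (v ^ (p - 1) * (1 + β * Real.log (1 + v))) := by
          rw [htq, ← hmul]; ring
end

section
/- Let n ≥ 1, 1 < p ≤ q₀ < q, and let p : ℝⁿ → ℝ satisfy p ≤ p(x) ≤ q₀ for all x. Define g(x,v) = v^{p(x)−1}·ln(e+v) for v > 0. Then for every x ∈ ℝⁿ and all w ≥ v > 0 one has (w/v)^{p−1} ≤ g(x,w)/g(x,v) ≤ (1 + 1/(e(q−q₀)))·(w/v)^{q−1}. -/
open Real

/-- The perturbed variable-exponent model `g(x,v) = v^{p(x)−1}·ln(e+v)` with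
`1 < p ≤ p(x) ≤ q₀ < q` satisfies condition (g2) with exponent `p` and condition (g1) with
exponent `q` and constant `1 + 1/(e(q−q₀))`, for all `w ≥ v > 0`. -/
theorem perturbed_variable_exponent_structure (n : ℕ) (hn : 1 ≤ n) (pl q₀ q : ℝ)
    (hpl : 1 < pl) (hplq₀ : pl ≤ q₀) (hq₀q : q₀ < q)
    (p : EuclideanSpace ℝ (Fin n) → ℝ) (hp : ∀ x, pl ≤ p x ∧ p x ≤ q₀) :
    ∀ x : EuclideanSpace ℝ (Fin n), ∀ v w : ℝ, 0 < v → v ≤ w →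
      (w / v) ^ (pl - 1) ≤
          (w ^ (p x - 1) * Real.log (Real.exp 1 + w)) /
            (v ^ (p x - 1) * Real.log (Real.exp 1 + v)) ∧
      (w ^ (p x - 1) * Real.log (Real.exp 1 + w)) /
          (v ^ (p x - 1) * Real.log (Real.exp 1 + v)) ≤
        (1 + 1 / (Real.exp 1 * (q - q₀))) * (w / v) ^ (q - 1) := by
  intro x v w hv hvw
  obtain ⟨hpl', hq₀'⟩ := hp x
  set a := p x - 1 with ha
  have hw : 0 < w := lt_of_lt_of_le hv hvw
  have ht1 : (1:ℝ) ≤ w / v := (one_le_div hv).2 hvw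
  have ht0 : (0:ℝ) < w / v := lt_of_lt_of_le one_pos ht1
  have he : (0:ℝ) < Real.exp 1 := Real.exp_pos 1
  have hLv : 1 ≤ Real.log (Real.exp 1 + v) := by
    rw [Real.le_log_iff_exp_le (by positivity)]; linarith
  have hLw : 1 ≤ Real.log (Real.exp 1 + w) := by
    rw [Real.le_log_iff_exp_le (by positivity)]; linarith
  have hLv0 : 0 < Real.log (Real.exp 1 + v) := lt_of_lt_of_le one_pos hLv
  have hratio : (w ^ a * Real.log (Real.exp 1 + w)) / (v ^ a * Real.log (Real.exp 1 + v))
      = (w/v) ^ a * (Real.log (Real.exp 1 + w) / Real.log (Real.exp 1 + v)) := by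
    rw [Real.div_rpow hw.le hv.le, div_mul_div_comm]
  have hta0 : 0 < (w/v) ^ a := Real.rpow_pos_of_pos ht0 a
  constructor
  · rw [hratio]
    have h1 : (w/v) ^ (pl - 1) ≤ (w/v) ^ a :=
      Real.rpow_le_rpow_of_exponent_le ht1 (by rw [ha]; linarith)
    have h2 : 1 ≤ Real.log (Real.exp 1 + w) / Real.log (Real.exp 1 + v) := by
      rw [le_div_iff₀ hLv0, one_mul]
      exact Real.log_le_log (by linarith) (by linarith)
    calc (w/v) ^ (pl - 1) ≤ (w/v) ^ a := h1
      _ ≤ (w/v) ^ a * (Real.log (Real.exp 1 + w) / Real.log (Real.exp 1 + v)) :=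
        le_mul_of_one_le_right hta0.le h2
  · rw [hratio]
    set t := w / v with htdef
    set δ := q - q₀ with hδ
    have hδ0 : (0:ℝ) < δ := sub_pos.2 hq₀q
    have hlt0 : 0 ≤ Real.log t := Real.log_nonneg ht1
    -- log t ≤ t^δ / (e δ)
    have hlogt : Real.log t ≤ t ^ δ / (Real.exp 1 * δ) := by
      have hs : 0 < t ^ δ := Real.rpow_pos_of_pos ht0 δ
      have h1 : Real.log (t ^ δ / Real.exp 1) ≤ t ^ δ / Real.exp 1 - 1 :=
        Real.log_le_sub_one_of_pos (by positivity)
      rw [Real.log_div hs.ne' (Real.exp_ne_zero 1), Real.log_exp, Real.log_rpow ht0] at h1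
      rw [le_div_iff₀ (by positivity)]
      have h2 : δ * Real.log t ≤ t ^ δ / Real.exp 1 := by linarith
      have h3 : (δ * Real.log t) * Real.exp 1 ≤ (t ^ δ / Real.exp 1) * Real.exp 1 :=
        mul_le_mul_of_nonneg_right h2 he.le
      rw [div_mul_cancel₀ _ (Real.exp_ne_zero 1)] at h3
      nlinarith
    -- log(e+w) ≤ log(e+v) + log t
    have hvwt : v * t = w := by rw [htdef]; field_simp
    have hLle : Real.log (Real.exp 1 + w) ≤ Real.log (Real.exp 1 + v) + Real.log t := by
      rw [← Real.log_mul (by positivity) ht0.ne']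
      apply Real.log_le_log (by linarith)
      nlinarith [mul_le_mul_of_nonneg_left ht1 he.le]
    have hLwLv : Real.log (Real.exp 1 + w) / Real.log (Real.exp 1 + v) ≤ 1 + Real.log t := by
      rw [div_le_iff₀ hLv0]
      nlinarith
    have h3 : t ^ a ≤ t ^ (q - 1) :=
      Real.rpow_le_rpow_of_exponent_le ht1 (by rw [ha]; linarith)
    have h4 : t ^ a * t ^ δ ≤ t ^ (q - 1) := by
      rw [← Real.rpow_add ht0]
      exact Real.rpow_le_rpow_of_exponent_le ht1 (by rw [ha, hδ]; linarith)
    have hstep : t ^ a * (Real.log (Real.exp 1 + w) / Real.log (Real.exp 1 + v))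
        ≤ t ^ a * (1 + Real.log t) := mul_le_mul_of_nonneg_left hLwLv hta0.le
    have hstep2 : t ^ a * Real.log t ≤ (t ^ a * t ^ δ) / (Real.exp 1 * δ) := by
      rw [mul_div_assoc]
      exact mul_le_mul_of_nonneg_left hlogt hta0.le
    have hinv : 0 < 1 / (Real.exp 1 * δ) := by positivity
    have h5 : (t ^ a * t ^ δ) / (Real.exp 1 * δ) ≤ t ^ (q-1) / (Real.exp 1 * δ) :=
      div_le_div_of_nonneg_right h4 (by positivity) |>.trans_eq rfl
    calc t ^ a * (Real.log (Real.exp 1 + w) / Real.log (Real.exp 1 + v))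
        ≤ t ^ a * (1 + Real.log t) := hstep
      _ = t ^ a + t ^ a * Real.log t := by ring
      _ ≤ t ^ (q-1) + t ^ (q-1) / (Real.exp 1 * δ) := by
          have := hstep2.trans h5; linarith
      _ = (1 + 1 / (Real.exp 1 * δ)) * t ^ (q-1) := by ring
end
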